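/- arXiv:2101.04665 — 4 statements merged into one kernel-verified Lean document; each statement's English description precedes it below -/
import Mathlib

section
/- Let δ be a positive integer and γ ∈ (0,1). Define C(t) = t(1 − t^δ)(t^δ − γ) for t ∈ ℝ. Then for all real u, v with w = u − v: (C(u) − C(v))·w ≤ −γ w² − ¼ u^{2δ} w² − ¼ v^{2δ} w² + 2^{2δ−1}(1+γ)²(δ+1)² w². -/
/-- Discrete mean value / difference of powers bound. -/
lemma pow_sub_pow_abs_le (u v : ℝ) : ∀ n : ℕ,
    |u ^ (n + 1) - v ^ (n + 1)| ≤ (n + 1 : ℝ) * (max |u| |v|) ^ n * |u - v| := by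
  intro n
  induction n with
  | zero => simp
  | succ n ih =>
    have hM : |u| ≤ max |u| |v| := le_max_left _ _
    have hMv : |v| ≤ max |u| |v| := le_max_right _ _
    have hM0 : (0 : ℝ) ≤ max |u| |v| := le_trans (abs_nonneg u) hM
    have key : u ^ (n + 2) - v ^ (n + 2)
        = u ^ (n + 1) * (u - v) + v * (u ^ (n + 1) - v ^ (n + 1)) := by ring
    calc |u ^ (n + 2) - v ^ (n + 2)|
        ≤ |u ^ (n + 1) * (u - v)| + |v * (u ^ (n + 1) - v ^ (n + 1))| := by
          rw [key]; exact abs_add_le _ _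
      _ = |u| ^ (n + 1) * |u - v| + |v| * |u ^ (n + 1) - v ^ (n + 1)| := by
          rw [abs_mul, abs_mul, abs_pow]
      _ ≤ (max |u| |v|) ^ (n + 1) * |u - v|
            + (max |u| |v|) * ((n + 1 : ℝ) * (max |u| |v|) ^ n * |u - v|) := by
          gcongr
      _ = ((n + 1 : ℕ) + 1 : ℝ) * (max |u| |v|) ^ (n + 1) * |u - v| := by push_cast; ring

/-- Strong monotonicity of the odd power. -/
lemma odd_pow_strong_mono (δ : ℕ) (u v : ℝ) :
    (1 / 2) * (u ^ (2 * δ) + v ^ (2 * δ)) * (u - v) ^ 2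
      ≤ (u ^ (2 * δ + 1) - v ^ (2 * δ + 1)) * (u - v) := by
  have hp : u ^ (2 * δ) = (u ^ 2) ^ δ := by rw [← pow_mul]
  have hq : v ^ (2 * δ) = (v ^ 2) ^ δ := by rw [← pow_mul]
  have hp1 : u ^ (2 * δ + 1) = u * (u ^ 2) ^ δ := by rw [← pow_mul, pow_succ']
  have hq1 : v ^ (2 * δ + 1) = v * (v ^ 2) ^ δ := by rw [← pow_mul, pow_succ']
  have h : 0 ≤ (u ^ 2 - v ^ 2) * ((u ^ 2) ^ δ - (v ^ 2) ^ δ) := by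
    rcases le_total (u ^ 2) (v ^ 2) with h | h
    · nlinarith [pow_le_pow_left₀ (sq_nonneg u) h δ]
    · nlinarith [pow_le_pow_left₀ (sq_nonneg v) h δ]
  rw [hp, hq, hp1, hq1]
  nlinarith [h]

/-- One-sided Lipschitz (quasi-monotonicity) bound for the Huxley nonlinearity
C(t) = t(1 − t^δ)(t^δ − γ): for all real u, v with w = u − v,
(C(u) − C(v))·w ≤ −γ w² − ¼ u^{2δ} w² − ¼ v^{2δ} w² + 2^{2δ−1}(1+γ)²(δ+1)² w². -/
theorem stmt_8 (δ : ℕ) (hδ : 0 < δ) (γ : ℝ) (hγ : γ ∈ Set.Ioo (0 : ℝ) 1)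
    (C : ℝ → ℝ) (hC : ∀ t : ℝ, C t = t * (1 - t ^ δ) * (t ^ δ - γ))
    (u v w : ℝ) (hw : w = u - v) :
    (C u - C v) * w ≤
      -γ * w ^ 2 - (1 / 4) * u ^ (2 * δ) * w ^ 2 - (1 / 4) * v ^ (2 * δ) * w ^ 2 +
        2 ^ (2 * δ - 1) * (1 + γ) ^ 2 * ((δ : ℝ) + 1) ^ 2 * w ^ 2 := by
  obtain ⟨hγ0, hγ1⟩ := hγ
  set M : ℝ := max |u| |v| with hM
  have hM0 : (0 : ℝ) ≤ M := le_trans (abs_nonneg u) (le_max_left _ _)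
  -- expansion of the difference
  have hexp : (C u - C v) * w
      = -((u ^ (2 * δ + 1) - v ^ (2 * δ + 1)) * w)
        + (1 + γ) * ((u ^ (δ + 1) - v ^ (δ + 1)) * w) - γ * w ^ 2 := by
    rw [hC, hC, hw]
    have e1 : u ^ (2 * δ + 1) = u * u ^ δ * u ^ δ := by rw [two_mul, pow_succ, pow_add]; ring
    have e2 : v ^ (2 * δ + 1) = v * v ^ δ * v ^ δ := by rw [two_mul, pow_succ, pow_add]; ring
    have e3 : u ^ (δ + 1) = u * u ^ δ := by rw [pow_succ]; ring
    have e4 : v ^ (δ + 1) = v * v ^ δ := by rw [pow_succ]; ring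
    rw [e1, e2, e3, e4]; ring
  -- strong monotonicity term
  have h1 : (1 / 2) * (u ^ (2 * δ) + v ^ (2 * δ)) * w ^ 2
      ≤ (u ^ (2 * δ + 1) - v ^ (2 * δ + 1)) * w := by
    rw [hw]; exact odd_pow_strong_mono δ u v
  -- middle term bound
  have h2 : (u ^ (δ + 1) - v ^ (δ + 1)) * w ≤ ((δ : ℝ) + 1) * M ^ δ * w ^ 2 := by
    have := pow_sub_pow_abs_le u v δ
    calc (u ^ (δ + 1) - v ^ (δ + 1)) * w ≤ |(u ^ (δ + 1) - v ^ (δ + 1)) * w| := le_abs_self _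
      _ = |u ^ (δ + 1) - v ^ (δ + 1)| * |w| := abs_mul _ _
      _ ≤ ((δ : ℝ) + 1) * M ^ δ * |u - v| * |w| :=
          mul_le_mul_of_nonneg_right this (abs_nonneg w)
      _ = ((δ : ℝ) + 1) * M ^ δ * w ^ 2 := by
          have habs : |u - v| * |u - v| = (u - v) ^ 2 := by rw [abs_mul_abs_self, pow_two]
          rw [hw, mul_assoc, habs]
  -- M^{2δ} ≤ u^{2δ} + v^{2δ}
  have hMsum : M ^ (2 * δ) ≤ u ^ (2 * δ) + v ^ (2 * δ) := by
    have hu : |u| ^ (2 * δ) = u ^ (2 * δ) := by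
      rw [pow_mul, pow_mul, sq_abs]
    have hv : |v| ^ (2 * δ) = v ^ (2 * δ) := by
      rw [pow_mul, pow_mul, sq_abs]
    have hu0 : (0 : ℝ) ≤ u ^ (2 * δ) := by rw [pow_mul]; positivity
    have hv0 : (0 : ℝ) ≤ v ^ (2 * δ) := by rw [pow_mul]; positivity
    rcases max_cases |u| |v| with ⟨h, _⟩ | ⟨h, _⟩ <;> rw [hM, h]
    · rw [hu]; linarith
    · rw [hv]; linarith
  -- Young's inequality step
  have h3 : (1 + γ) * (((δ : ℝ) + 1) * M ^ δ * w ^ 2)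
      ≤ (1 / 4) * (u ^ (2 * δ) + v ^ (2 * δ)) * w ^ 2 + (1 + γ) ^ 2 * ((δ : ℝ) + 1) ^ 2 * w ^ 2 := by
    have hM2 : (M ^ δ) ^ 2 = M ^ (2 * δ) := by rw [← pow_mul]; ring_nf
    nlinarith [sq_nonneg ((1 / 2) * M ^ δ - (1 + γ) * ((δ : ℝ) + 1)), sq_nonneg w,
      mul_le_mul_of_nonneg_right hMsum (sq_nonneg w)]
  -- constant comparison
  have h4 : (1 + γ) ^ 2 * ((δ : ℝ) + 1) ^ 2 * w ^ 2
      ≤ 2 ^ (2 * δ - 1) * (1 + γ) ^ 2 * ((δ : ℝ) + 1) ^ 2 * w ^ 2 := by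
    have h21 : (1 : ℝ) ≤ 2 ^ (2 * δ - 1) := one_le_pow₀ (by norm_num : (1:ℝ) ≤ 2)
    have hnn : (0 : ℝ) ≤ (1 + γ) ^ 2 * ((δ : ℝ) + 1) ^ 2 * w ^ 2 := by positivity
    nlinarith [hnn, h21]
  have h2' : (1 + γ) * ((u ^ (δ + 1) - v ^ (δ + 1)) * w)
      ≤ (1 + γ) * (((δ : ℝ) + 1) * M ^ δ * w ^ 2) := by nlinarith [h2]
  rw [hexp]
  linarith
end

section
/- Let (X, μ) be a finite measure space, δ a positive integer, β > 0, γ ∈ (0,1), and let u, v : X → ℝ be measurable functions in L^{2δ+2}(μ). Set w = u − v and C(t) = t(1 − t^δ)(t^δ − γ). Then β ∫ (C(u) − C(v))·w dμ ≤ −βγ ∫ w² dμ − (β/4) ∫ u^{2δ} w² dμ − (β/4) ∫ v^{2δ} w² dμ + β·2^{2δ−1}(1+γ)²(δ+1)² ∫ w² dμ. -/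
/-!
Expanding `C(t) = -γ t + (1 + γ) t^(δ+1) - t^(2δ+1)` splits `(C(a) - C(b))(a - b)` into three
terms. The top-degree one is at most `-(a^(2δ) + b^(2δ))(a - b)²/2`, since the defect is
`(a² - b²)(a^(2δ) - b^(2δ))/2 ≥ 0`; the middle one is at most
`(1 + γ)(δ + 1) max(|a|,|b|)^δ (a - b)²` by the mean value bound for `t^(δ+1)`, and Young's
inequality trades it for a quarter of the top-degree gain plus `((1 + γ)(δ + 1))² (a - b)²`,
below the paper's constant. Integrating this pointwise bound gives the estimate; every integrand
is integrable because it is dominated by `1 + |u|^(2δ+2) + |v|^(2δ+2)` on a finite measure space.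
-/

open MeasureTheory

def huxley (δ : ℕ) (γ t : ℝ) : ℝ := t * (1 - t ^ δ) * (t ^ δ - γ)

@[fun_prop]
lemma continuous_huxley (δ : ℕ) (γ : ℝ) : Continuous (huxley δ γ) := by
  unfold huxley; fun_prop

lemma huxley_sub_mul_sub_eq (δ : ℕ) (γ a b : ℝ) :
    (huxley δ γ a - huxley δ γ b) * (a - b) =
      -γ * (a - b) ^ 2 + (1 + γ) * ((a ^ (δ + 1) - b ^ (δ + 1)) * (a - b)) -
        (a ^ (2 * δ + 1) - b ^ (2 * δ + 1)) * (a - b) := by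
  unfold huxley; ring

lemma pow_add_pow_mul_sub_sq_le (n : ℕ) (a b : ℝ) :
    (a ^ (2 * n) + b ^ (2 * n)) * (a - b) ^ 2 ≤
      2 * ((a ^ (2 * n + 1) - b ^ (2 * n + 1)) * (a - b)) := by
  have hmono : 0 ≤ (a ^ 2 - b ^ 2) * ((a ^ 2) ^ n - (b ^ 2) ^ n) := by
    rcases le_total (a ^ 2) (b ^ 2) with h | h
    · exact mul_nonneg_of_nonpos_of_nonpos (sub_nonpos.2 h)
        (sub_nonpos.2 (pow_le_pow_left₀ (sq_nonneg a) h n))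
    · exact mul_nonneg (sub_nonneg.2 h) (sub_nonneg.2 (pow_le_pow_left₀ (sq_nonneg b) h n))
  have hdiff : 2 * ((a ^ (2 * n + 1) - b ^ (2 * n + 1)) * (a - b)) -
      (a ^ (2 * n) + b ^ (2 * n)) * (a - b) ^ 2 =
        (a ^ 2 - b ^ 2) * ((a ^ 2) ^ n - (b ^ 2) ^ n) := by
    rw [pow_succ, pow_succ, pow_mul, pow_mul]; ring
  linarith

lemma max_abs_pow_le_pow_add_pow (n : ℕ) (a b : ℝ) :
    max |a| |b| ^ (2 * n) ≤ a ^ (2 * n) + b ^ (2 * n) := by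
  rw [← (even_two_mul n).pow_abs a, ← (even_two_mul n).pow_abs b]
  have := pow_nonneg (abs_nonneg a) (2 * n)
  have := pow_nonneg (abs_nonneg b) (2 * n)
  rcases max_cases |a| |b| with ⟨h, -⟩ | ⟨h, -⟩ <;> rw [h] <;> linarith

theorem huxley_sub_mul_sub_le {γ : ℝ} (hγ : -1 ≤ γ) (δ : ℕ) (a b : ℝ) :
    (huxley δ γ a - huxley δ γ b) * (a - b) ≤
      -γ * (a - b) ^ 2 - a ^ (2 * δ) * (a - b) ^ 2 / 4 - b ^ (2 * δ) * (a - b) ^ 2 / 4 +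
        ((1 + γ) * (δ + 1)) ^ 2 * (a - b) ^ 2 := by
  set M := max |a| |b|
  set c := (1 + γ) * ((δ : ℝ) + 1)
  have hmid : (1 + γ) * ((a ^ (δ + 1) - b ^ (δ + 1)) * (a - b)) ≤ c * M ^ δ * (a - b) ^ 2 :=
    calc (1 + γ) * ((a ^ (δ + 1) - b ^ (δ + 1)) * (a - b))
        ≤ (1 + γ) * (|a ^ (δ + 1) - b ^ (δ + 1)| * |a - b|) :=
          mul_le_mul_of_nonneg_left (abs_mul _ (a - b) ▸ le_abs_self _) (by linarith)
      _ ≤ (1 + γ) * (|a - b| * (δ + 1 : ℕ) * M ^ δ * |a - b|) := by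
          gcongr
          · linarith
          · exact abs_pow_sub_pow_le ..
      _ = c * M ^ δ * (a - b) ^ 2 := by rw [← sq_abs (a - b)]; push_cast; ring
  have young : c * M ^ δ ≤ M ^ (2 * δ) / 4 + c ^ 2 := by
    rw [mul_comm 2 δ, pow_mul]; nlinarith [sq_nonneg (M ^ δ - 2 * c)]
  have hsq := sq_nonneg (a - b)
  have hmax := mul_le_mul_of_nonneg_right (max_abs_pow_le_pow_add_pow δ a b) hsq
  have hyoung := mul_le_mul_of_nonneg_right young hsq
  have hodd := pow_add_pow_mul_sub_sq_le δ a b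
  rw [huxley_sub_mul_sub_eq]
  linarith

section Growth

variable {a b N : ℝ}

lemma abs_sub_le_two_mul (ha : |a| ≤ N) (hb : |b| ≤ N) : |a - b| ≤ 2 * N :=
  (abs_sub a b).trans (by linarith)

lemma abs_huxley_le {δ : ℕ} {γ : ℝ} (hN : 1 ≤ N) (ha : |a| ≤ N) :
    |huxley δ γ a| ≤ 2 * (1 + |γ|) * N ^ (2 * δ + 1) := by
  have haδ : |a ^ δ| ≤ N ^ δ := by rw [abs_pow]; gcongr
  have hNδ : 1 ≤ N ^ δ := one_le_pow₀ hN
  calc |huxley δ γ a| = |a| * |1 - a ^ δ| * |a ^ δ - γ| := by simp only [huxley, abs_mul]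
    _ ≤ N * (2 * N ^ δ) * ((1 + |γ|) * N ^ δ) := by
        gcongr
        · exact (abs_sub _ _).trans (by rw [abs_one]; linarith)
        · exact (abs_sub _ _).trans (by nlinarith [abs_nonneg γ])
    _ = 2 * (1 + |γ|) * N ^ (2 * δ + 1) := by ring

lemma abs_huxley_sub_mul_sub_le {δ : ℕ} {γ : ℝ} (hN : 1 ≤ N) (ha : |a| ≤ N) (hb : |b| ≤ N) :
    |(huxley δ γ a - huxley δ γ b) * (a - b)| ≤ 8 * (1 + |γ|) * N ^ (2 * δ + 2) :=
  calc |(huxley δ γ a - huxley δ γ b) * (a - b)|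
      = |huxley δ γ a - huxley δ γ b| * |a - b| := abs_mul _ _
    _ ≤ (2 * (2 * (1 + |γ|) * N ^ (2 * δ + 1))) * (2 * N) := by
        gcongr
        exacts [abs_sub_le_two_mul (abs_huxley_le hN ha) (abs_huxley_le hN hb),
          abs_sub_le_two_mul ha hb]
    _ = 8 * (1 + |γ|) * N ^ (2 * δ + 2) := by ring

lemma abs_pow_mul_sub_sq_le (k : ℕ) (ha : |a| ≤ N) (hb : |b| ≤ N) :
    |a ^ k * (a - b) ^ 2| ≤ 4 * N ^ (k + 2) := by
  have hN : 0 ≤ N := (abs_nonneg a).trans ha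
  calc |a ^ k * (a - b) ^ 2| = |a| ^ k * |a - b| ^ 2 := by rw [abs_mul, abs_pow, abs_pow]
    _ ≤ N ^ k * (2 * N) ^ 2 := by gcongr; exact abs_sub_le_two_mul ha hb
    _ = 4 * N ^ (k + 2) := by ring

end Growth

lemma max_one_max_abs_pow_le (a b : ℝ) (m : ℕ) :
    max 1 (max |a| |b|) ^ m ≤ 1 + |a| ^ m + |b| ^ m := by
  have := pow_nonneg (abs_nonneg a) m
  have := pow_nonneg (abs_nonneg b) m
  rcases max_cases 1 (max |a| |b|) with ⟨h, -⟩ | ⟨h, -⟩ <;> rw [h]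
  · rw [one_pow]; linarith
  · rcases max_cases |a| |b| with ⟨h', -⟩ | ⟨h', -⟩ <;> rw [h'] <;> linarith

section Integrability

variable {X : Type*} [MeasurableSpace X] {μ : Measure X} [IsFiniteMeasure μ] {m : ℕ}
  {u v : X → ℝ}

lemma integrable_of_abs_le_mul_pow (hu : Integrable (fun x => |u x| ^ m) μ)
    (hv : Integrable (fun x => |v x| ^ m) μ) {f : X → ℝ} (hf : AEStronglyMeasurable f μ)
    {c : ℝ} {k : ℕ} (hk : k ≤ m)
    (hfb : ∀ x N, 1 ≤ N → |u x| ≤ N → |v x| ≤ N → |f x| ≤ c * N ^ k) : Integrable f μ := by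
  refine (((integrable_const 1).add hu).add hv).const_mul |c| |>.mono' hf
    (.of_forall fun x => ?_)
  set N := max 1 (max |u x| |v x|)
  have hN : 1 ≤ N := le_max_left _ _
  calc ‖f x‖ = |f x| := Real.norm_eq_abs _
    _ ≤ |c| * N ^ k := (hfb x N hN ((le_max_left _ _).trans (le_max_right _ _))
          ((le_max_right _ _).trans (le_max_right _ _))).trans (by gcongr; exact le_abs_self c)
    _ ≤ |c| * N ^ m := by gcongr
    _ ≤ |c| * (1 + |u x| ^ m + |v x| ^ m) := by gcongr; exact max_one_max_abs_pow_le ..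

end Integrability

theorem stmt_10_general {X : Type*} [MeasurableSpace X] (μ : Measure X) [IsFiniteMeasure μ]
    (δ : ℕ) (β γ : ℝ) (hβ : 0 < β) (hγ : γ ∈ Set.Ioo (0 : ℝ) 1)
    (u v : X → ℝ) (hu : Measurable u) (hv : Measurable v)
    (hu2 : Integrable (fun x => |u x| ^ (2 * δ + 2)) μ)
    (hv2 : Integrable (fun x => |v x| ^ (2 * δ + 2)) μ)
    (w : X → ℝ) (hw : w = fun x => u x - v x)
    (C : ℝ → ℝ) (hC : ∀ t : ℝ, C t = t * (1 - t ^ δ) * (t ^ δ - γ)) :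
    β * ∫ x, (C (u x) - C (v x)) * w x ∂μ ≤
      -(β * γ) * ∫ x, w x ^ 2 ∂μ - (β / 4) * ∫ x, u x ^ (2 * δ) * w x ^ 2 ∂μ -
          (β / 4) * ∫ x, v x ^ (2 * δ) * w x ^ 2 ∂μ +
        β * 2 ^ (2 * δ - 1) * (1 + γ) ^ 2 * ((δ : ℝ) + 1) ^ 2 * ∫ x, w x ^ 2 ∂μ := by
  obtain rfl : C = huxley δ γ := funext hC
  subst hw
  have hK : ((1 + γ) * (δ + 1)) ^ 2 ≤ 2 ^ (2 * δ - 1) * (1 + γ) ^ 2 * ((δ : ℝ) + 1) ^ 2 := by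
    rw [mul_pow, mul_assoc]
    exact le_mul_of_one_le_left (by positivity) (one_le_pow₀ one_le_two)
  set K : ℝ := 2 ^ (2 * δ - 1) * (1 + γ) ^ 2 * ((δ : ℝ) + 1) ^ 2
  have hC_int : Integrable (fun x => (huxley δ γ (u x) - huxley δ γ (v x)) * (u x - v x)) μ :=
    integrable_of_abs_le_mul_pow hu2 hv2 (by fun_prop) le_rfl
      fun _ _ hN hux hvx => abs_huxley_sub_mul_sub_le hN hux hvx
  have hw_int : Integrable (fun x => (u x - v x) ^ 2) μ :=
    integrable_of_abs_le_mul_pow hu2 hv2 (by fun_prop) (k := 2) (by omega)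
      fun _ _ _ hux hvx => by simpa using abs_pow_mul_sub_sq_le 0 hux hvx
  have hu_int : Integrable (fun x => u x ^ (2 * δ) * (u x - v x) ^ 2) μ :=
    integrable_of_abs_le_mul_pow hu2 hv2 (by fun_prop) le_rfl
      fun _ _ _ hux hvx => abs_pow_mul_sub_sq_le _ hux hvx
  have hv_int : Integrable (fun x => v x ^ (2 * δ) * (u x - v x) ^ 2) μ :=
    integrable_of_abs_le_mul_pow hu2 hv2 (by fun_prop) le_rfl
      fun _ _ _ hux hvx => by rw [← neg_sub, neg_sq]; exact abs_pow_mul_sub_sq_le _ hvx hux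
  have hpt : ∀ x, (huxley δ γ (u x) - huxley δ γ (v x)) * (u x - v x) ≤
      -γ * (u x - v x) ^ 2 - u x ^ (2 * δ) * (u x - v x) ^ 2 / 4 -
        v x ^ (2 * δ) * (u x - v x) ^ 2 / 4 + K * (u x - v x) ^ 2 := fun x =>
    (huxley_sub_mul_sub_le (by linarith [hγ.1]) δ (u x) (v x)).trans (by gcongr)
  calc β * ∫ x, (huxley δ γ (u x) - huxley δ γ (v x)) * (u x - v x) ∂μ
      ≤ β * ∫ x, (-γ * (u x - v x) ^ 2 - u x ^ (2 * δ) * (u x - v x) ^ 2 / 4 -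
          v x ^ (2 * δ) * (u x - v x) ^ 2 / 4 + K * (u x - v x) ^ 2) ∂μ :=
        mul_le_mul_of_nonneg_left (integral_mono hC_int (by fun_prop) hpt) hβ.le
    _ = _ := by
        rw [integral_add (by fun_prop) (by fun_prop), integral_sub (by fun_prop) (by fun_prop),
          integral_sub (by fun_prop) (by fun_prop), integral_const_mul, integral_div,
          integral_div, integral_const_mul]
        ring

/-- Paper's estimate (327): for the Huxley nonlinearity C(t) = t(1 − t^δ)(t^δ − γ) with
δ a positive integer, γ ∈ (0,1), β > 0, and u, v ∈ L^{2δ+2}(μ) on a finite measure space,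
with w = u − v:
β ∫ (C(u) − C(v))·w dμ ≤ −βγ ∫ w² dμ − (β/4) ∫ u^{2δ} w² dμ − (β/4) ∫ v^{2δ} w² dμ
  + β·2^{2δ−1}(1+γ)²(δ+1)² ∫ w² dμ. -/
theorem stmt_10 {X : Type*} [MeasurableSpace X] (μ : Measure X) [IsFiniteMeasure μ]
    (δ : ℕ) (hδ : 0 < δ) (β γ : ℝ) (hβ : 0 < β) (hγ : γ ∈ Set.Ioo (0 : ℝ) 1)
    (u v : X → ℝ) (hu : Measurable u) (hv : Measurable v)
    (hu2 : Integrable (fun x => |u x| ^ (2 * δ + 2)) μ)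
    (hv2 : Integrable (fun x => |v x| ^ (2 * δ + 2)) μ)
    (w : X → ℝ) (hw : w = fun x => u x - v x)
    (C : ℝ → ℝ) (hC : ∀ t : ℝ, C t = t * (1 - t ^ δ) * (t ^ δ - γ)) :
    β * ∫ x, (C (u x) - C (v x)) * w x ∂μ ≤
      -(β * γ) * ∫ x, w x ^ 2 ∂μ - (β / 4) * ∫ x, u x ^ (2 * δ) * w x ^ 2 ∂μ -
          (β / 4) * ∫ x, v x ^ (2 * δ) * w x ^ 2 ∂μ +
        β * 2 ^ (2 * δ - 1) * (1 + γ) ^ 2 * ((δ : ℝ) + 1) ^ 2 * ∫ x, w x ^ 2 ∂μ :=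
  stmt_10_general μ δ β γ hβ hγ u v hu hv hu2 hv2 w hw C hC
end

section
/- Let (X, μ) be a finite measure space, δ a positive integer, and let u, v, g : X → ℝ be measurable functions with u, v ∈ L²(μ) ∩ L^{2(δ+1)}(μ) and g ∈ L^{2(δ+1)}(μ). Then | ∫ (u^{δ+1} − v^{δ+1})·g dμ | ≤ (δ+1)·2^{δ−1}·‖u − v‖_{L²(μ)} · ( ‖u‖_{L^{2(δ+1)}(μ)}^δ + ‖v‖_{L^{2(δ+1)}(μ)}^δ ) · ‖g‖_{L^{2(δ+1)}(μ)}. -/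
open MeasureTheory

/-- The L^p(μ) norm ‖f‖_{L^p(μ)} = (∫ |f|^p dμ)^{1/p}. -/
noncomputable def lpNormR {X : Type*} [MeasurableSpace X] (μ : Measure X) (p : ℕ)
    (f : X → ℝ) : ℝ :=
  (∫ x, |f x| ^ p ∂μ) ^ ((1 : ℝ) / p)

/-!
Pointwise, `|a^(δ+1) - b^(δ+1)| ≤ (δ+1) |a - b| (|a|^δ + |b|^δ)`, which splits the integrand
into two terms `|u - v| |w|^δ |g|` with `w = u, v`. Each is `F^(1/2) G^(δ/(2(δ+1))) H^(1/(2(δ+1)))`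
for `F = |u - v|^2`, `G = |w|^(2(δ+1))`, `H = |g|^(2(δ+1))`; the weights sum to `1`, so Hölder's
inequality for three functions bounds its integral by `‖u - v‖₂ ‖w‖^δ_{2(δ+1)} ‖g‖_{2(δ+1)}`.
The factor `2^(δ-1) ≥ 1` is not needed.
-/

theorem abs_pow_succ_sub_pow_succ_le {R : Type*} [CommRing R] [LinearOrder R] [IsOrderedRing R]
    (a b : R) (n : ℕ) :
    |a ^ (n + 1) - b ^ (n + 1)| ≤ (n + 1) * |a - b| * (|a| ^ n + |b| ^ n) := by
  have hmax : max |a| |b| ^ n ≤ |a| ^ n + |b| ^ n := by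
    rcases max_cases |a| |b| with ⟨h, -⟩ | ⟨h, -⟩ <;> rw [h]
    · exact le_add_of_nonneg_right (by positivity)
    · exact le_add_of_nonneg_left (by positivity)
  calc |a ^ (n + 1) - b ^ (n + 1)| ≤ |a - b| * (n + 1 : ℕ) * max |a| |b| ^ n :=
        abs_pow_sub_pow_le ..
    _ = (n + 1 : ℕ) * |a - b| * max |a| |b| ^ n := by ring
    _ ≤ (n + 1 : ℕ) * |a - b| * (|a| ^ n + |b| ^ n) := by gcongr
    _ = _ := by push_cast; ring

theorem Real.pow_rpow_div_natCast {x : ℝ} (hx : 0 ≤ x) {k : ℕ} (hk : k ≠ 0) (m : ℕ) :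
    (x ^ k) ^ ((m : ℝ) / k) = x ^ m := by
  rw [← Real.rpow_natCast x k, ← Real.rpow_mul hx, mul_div_cancel₀ _ (Nat.cast_ne_zero.2 hk),
    Real.rpow_natCast]

theorem abs_mul_pow_mul_abs_eq_rpow (n : ℕ) (x y z : ℝ) :
    |x| * |y| ^ n * |z| = (|x| ^ 2) ^ ((1 : ℝ) / (2 : ℕ)) *
      (|y| ^ (2 * (n + 1))) ^ ((n : ℝ) / (2 * (n + 1) : ℕ)) *
      (|z| ^ (2 * (n + 1))) ^ ((1 : ℝ) / (2 * (n + 1) : ℕ)) := by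
  have hk : 2 * (n + 1) ≠ 0 := by omega
  have hx := Real.pow_rpow_div_natCast (abs_nonneg x) two_ne_zero 1
  have hz := Real.pow_rpow_div_natCast (abs_nonneg z) hk 1
  rw [Nat.cast_one, pow_one] at hx hz
  rw [hx, Real.pow_rpow_div_natCast (abs_nonneg y) hk, hz]

theorem one_half_add_div_add_div_eq_one (n : ℕ) :
    (1 : ℝ) / (2 : ℕ) + (n : ℝ) / (2 * (n + 1) : ℕ) + (1 : ℝ) / (2 * (n + 1) : ℕ) = 1 := by
  push_cast; field_simp; ring

theorem ENNReal.ofReal_rpow_mul_rpow_mul_rpow {x y z a b c : ℝ} (hx : 0 ≤ x) (hy : 0 ≤ y)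
    (hz : 0 ≤ z) (ha : 0 ≤ a) (hb : 0 ≤ b) (hc : 0 ≤ c) :
    ENNReal.ofReal (x ^ a * y ^ b * z ^ c) =
      ENNReal.ofReal x ^ a * ENNReal.ofReal y ^ b * ENNReal.ofReal z ^ c := by
  rw [ENNReal.ofReal_mul (by positivity), ENNReal.ofReal_mul (by positivity),
    ENNReal.ofReal_rpow_of_nonneg hx ha, ENNReal.ofReal_rpow_of_nonneg hy hb,
    ENNReal.ofReal_rpow_of_nonneg hz hc]

section WeightedHolder

variable {X : Type*} [MeasurableSpace X] {μ : Measure X} {a b c : ℝ}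

theorem ENNReal.lintegral_rpow_mul_rpow_mul_rpow_le {F G H : X → ENNReal}
    (hF : AEMeasurable F μ) (hG : AEMeasurable G μ) (hH : AEMeasurable H μ)
    (ha : 0 ≤ a) (hb : 0 ≤ b) (hc : 0 ≤ c) (habc : a + b + c = 1) :
    ∫⁻ x, F x ^ a * G x ^ b * H x ^ c ∂μ ≤
      (∫⁻ x, F x ∂μ) ^ a * (∫⁻ x, G x ∂μ) ^ b * (∫⁻ x, H x ∂μ) ^ c := by
  have := ENNReal.lintegral_prod_norm_pow_le (μ := μ) Finset.univ (f := ![F, G, H])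
    (p := ![a, b, c]) (by simp [Fin.forall_fin_succ, hF, hG, hH])
    (by simpa [Fin.sum_univ_three] using habc) (by simp [Fin.forall_fin_succ, ha, hb, hc])
  simpa [Fin.prod_univ_three, mul_assoc] using this

variable {F G H : X → ℝ}

theorem integrable_rpow_mul_rpow_mul_rpow (hF : ∀ x, 0 ≤ F x) (hG : ∀ x, 0 ≤ G x)
    (hH : ∀ x, 0 ≤ H x) (hFi : Integrable F μ) (hGi : Integrable G μ) (hHi : Integrable H μ)
    (ha : 0 ≤ a) (hb : 0 ≤ b) (hc : 0 ≤ c) (habc : a + b + c = 1) :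
    Integrable (fun x => F x ^ a * G x ^ b * H x ^ c) μ := by
  refine Integrable.mono' (((hFi.const_mul a).add (hGi.const_mul b)).add (hHi.const_mul c))
    (((hFi.aemeasurable.pow_const a).mul (hGi.aemeasurable.pow_const b)).mul
      (hHi.aemeasurable.pow_const c)).aestronglyMeasurable (.of_forall fun x => ?_)
  have := hF x; have := hG x; have := hH x
  rw [Real.norm_of_nonneg (by positivity)]
  exact Real.geom_mean_le_arith_mean3_weighted ha hb hc (hF x) (hG x) (hH x) habc

theorem integral_rpow_mul_rpow_mul_rpow_le (hF : ∀ x, 0 ≤ F x) (hG : ∀ x, 0 ≤ G x)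
    (hH : ∀ x, 0 ≤ H x) (hFi : Integrable F μ) (hGi : Integrable G μ) (hHi : Integrable H μ)
    (ha : 0 ≤ a) (hb : 0 ≤ b) (hc : 0 ≤ c) (habc : a + b + c = 1) :
    ∫ x, F x ^ a * G x ^ b * H x ^ c ∂μ ≤
      (∫ x, F x ∂μ) ^ a * (∫ x, G x ∂μ) ^ b * (∫ x, H x ∂μ) ^ c := by
  have hIF : 0 ≤ ∫ x, F x ∂μ := integral_nonneg hF
  have hIG : 0 ≤ ∫ x, G x ∂μ := integral_nonneg hG
  have hIH : 0 ≤ ∫ x, H x ∂μ := integral_nonneg hH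
  rw [← ENNReal.ofReal_le_ofReal_iff (by positivity)]
  calc ENNReal.ofReal (∫ x, F x ^ a * G x ^ b * H x ^ c ∂μ)
      = ∫⁻ x, ENNReal.ofReal (F x) ^ a * ENNReal.ofReal (G x) ^ b *
          ENNReal.ofReal (H x) ^ c ∂μ := by
        rw [ofReal_integral_eq_lintegral_ofReal
          (integrable_rpow_mul_rpow_mul_rpow hF hG hH hFi hGi hHi ha hb hc habc)
          (.of_forall fun x => by have := hF x; have := hG x; have := hH x; positivity)]
        exact lintegral_congr fun x =>
          ENNReal.ofReal_rpow_mul_rpow_mul_rpow (hF x) (hG x) (hH x) ha hb hc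
    _ ≤ (∫⁻ x, ENNReal.ofReal (F x) ∂μ) ^ a * (∫⁻ x, ENNReal.ofReal (G x) ∂μ) ^ b *
          (∫⁻ x, ENNReal.ofReal (H x) ∂μ) ^ c :=
        ENNReal.lintegral_rpow_mul_rpow_mul_rpow_le hFi.aemeasurable.ennreal_ofReal
          hGi.aemeasurable.ennreal_ofReal hHi.aemeasurable.ennreal_ofReal ha hb hc habc
    _ = _ := by
        rw [← ofReal_integral_eq_lintegral_ofReal hFi (.of_forall hF),
          ← ofReal_integral_eq_lintegral_ofReal hGi (.of_forall hG),
          ← ofReal_integral_eq_lintegral_ofReal hHi (.of_forall hH),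
          ENNReal.ofReal_rpow_mul_rpow_mul_rpow hIF hIG hIH ha hb hc]

end WeightedHolder

section lpNormR

variable {X : Type*} [MeasurableSpace X] {μ : Measure X}

theorem lpNormR_nonneg (p : ℕ) (f : X → ℝ) : 0 ≤ lpNormR μ p f :=
  Real.rpow_nonneg (integral_nonneg fun x => by positivity) _

theorem lpNormR_pow (p m : ℕ) (f : X → ℝ) :
    lpNormR μ p f ^ m = (∫ x, |f x| ^ p ∂μ) ^ ((m : ℝ) / p) := by
  rw [lpNormR, ← Real.rpow_natCast, ← Real.rpow_mul (integral_nonneg fun x => by positivity),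
    one_div_mul_eq_div]

theorem integrable_abs_sub_sq {u v : X → ℝ} (hu : AEStronglyMeasurable u μ)
    (hv : AEStronglyMeasurable v μ) (hu2 : Integrable (fun x => |u x| ^ 2) μ)
    (hv2 : Integrable (fun x => |v x| ^ 2) μ) :
    Integrable (fun x => |u x - v x| ^ 2) μ := by
  have huv := ((memLp_two_iff_integrable_sq hu).2 (by simpa only [sq_abs] using hu2)).sub
    ((memLp_two_iff_integrable_sq hv).2 (by simpa only [sq_abs] using hv2))
  simpa only [sq_abs, Pi.sub_apply] using huv.integrable_sq

variable {f w g : X → ℝ} (n : ℕ)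

theorem integrable_abs_mul_pow_mul_abs (hf : Integrable (fun x => |f x| ^ 2) μ)
    (hw : Integrable (fun x => |w x| ^ (2 * (n + 1))) μ)
    (hg : Integrable (fun x => |g x| ^ (2 * (n + 1))) μ) :
    Integrable (fun x => |f x| * |w x| ^ n * |g x|) μ := by
  simp_rw [abs_mul_pow_mul_abs_eq_rpow n]
  exact integrable_rpow_mul_rpow_mul_rpow (fun x => by positivity) (fun x => by positivity)
    (fun x => by positivity) hf hw hg (by positivity) (by positivity) (by positivity)
    (one_half_add_div_add_div_eq_one n)

theorem integral_abs_mul_pow_mul_abs_le (hf : Integrable (fun x => |f x| ^ 2) μ)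
    (hw : Integrable (fun x => |w x| ^ (2 * (n + 1))) μ)
    (hg : Integrable (fun x => |g x| ^ (2 * (n + 1))) μ) :
    ∫ x, |f x| * |w x| ^ n * |g x| ∂μ ≤
      lpNormR μ 2 f * lpNormR μ (2 * (n + 1)) w ^ n * lpNormR μ (2 * (n + 1)) g := by
  simp_rw [abs_mul_pow_mul_abs_eq_rpow n, lpNormR_pow]
  exact integral_rpow_mul_rpow_mul_rpow_le (fun x => by positivity) (fun x => by positivity)
    (fun x => by positivity) hf hw hg (by positivity) (by positivity) (by positivity)
    (one_half_add_div_add_div_eq_one n)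

end lpNormR

theorem stmt_12_general {X : Type*} [MeasurableSpace X] (μ : Measure X)
    (δ : ℕ) (u v g : X → ℝ)
    (hu : Measurable u) (hv : Measurable v)
    (hu2 : Integrable (fun x => |u x| ^ 2) μ)
    (hv2 : Integrable (fun x => |v x| ^ 2) μ)
    (hup : Integrable (fun x => |u x| ^ (2 * (δ + 1))) μ)
    (hvp : Integrable (fun x => |v x| ^ (2 * (δ + 1))) μ)
    (hgp : Integrable (fun x => |g x| ^ (2 * (δ + 1))) μ) :
    |∫ x, (u x ^ (δ + 1) - v x ^ (δ + 1)) * g x ∂μ| ≤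
      ((δ : ℝ) + 1) * 2 ^ (δ - 1) * lpNormR μ 2 (fun x => u x - v x) *
        (lpNormR μ (2 * (δ + 1)) u ^ δ + lpNormR μ (2 * (δ + 1)) v ^ δ) *
        lpNormR μ (2 * (δ + 1)) g := by
  have huv := integrable_abs_sub_sq hu.aestronglyMeasurable hv.aestronglyMeasurable hu2 hv2
  have hPu := integrable_abs_mul_pow_mul_abs δ huv hup hgp
  have hPv := integrable_abs_mul_pow_mul_abs δ huv hvp hgp
  have := lpNormR_nonneg (μ := μ) 2 fun x => u x - v x
  have := lpNormR_nonneg (μ := μ) (2 * (δ + 1)) u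
  have := lpNormR_nonneg (μ := μ) (2 * (δ + 1)) v
  have := lpNormR_nonneg (μ := μ) (2 * (δ + 1)) g
  calc |∫ x, (u x ^ (δ + 1) - v x ^ (δ + 1)) * g x ∂μ|
      ≤ ∫ x, |(u x ^ (δ + 1) - v x ^ (δ + 1)) * g x| ∂μ := abs_integral_le_integral_abs
    _ ≤ ∫ x, ((δ : ℝ) + 1) * (|u x - v x| * |u x| ^ δ * |g x| +
          |u x - v x| * |v x| ^ δ * |g x|) ∂μ := by
        refine integral_mono_of_nonneg (.of_forall fun x => abs_nonneg _)
          ((hPu.add hPv).const_mul _) (.of_forall fun x => ?_)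
        calc |(u x ^ (δ + 1) - v x ^ (δ + 1)) * g x|
            = |u x ^ (δ + 1) - v x ^ (δ + 1)| * |g x| := abs_mul ..
          _ ≤ ((δ : ℝ) + 1) * |u x - v x| * (|u x| ^ δ + |v x| ^ δ) * |g x| := by
            gcongr; exact abs_pow_succ_sub_pow_succ_le ..
          _ = _ := by ring
    _ = ((δ : ℝ) + 1) * (∫ x, |u x - v x| * |u x| ^ δ * |g x| ∂μ +
          ∫ x, |u x - v x| * |v x| ^ δ * |g x| ∂μ) := by
        rw [integral_const_mul, integral_add hPu hPv]
    _ ≤ ((δ : ℝ) + 1) * 1 * lpNormR μ 2 (fun x => u x - v x) *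
          (lpNormR μ (2 * (δ + 1)) u ^ δ + lpNormR μ (2 * (δ + 1)) v ^ δ) *
          lpNormR μ (2 * (δ + 1)) g := by
        grw [integral_abs_mul_pow_mul_abs_le δ huv hup hgp,
          integral_abs_mul_pow_mul_abs_le δ huv hvp hgp]
        exact (by ring : _ = _).le
    _ ≤ _ := by gcongr; exact one_le_pow₀ (by norm_num)

/-- Three-factor Hölder bound (paper's estimate (215)): on a finite measure space, for
u, v ∈ L²(μ) ∩ L^{2(δ+1)}(μ) and g ∈ L^{2(δ+1)}(μ),
| ∫ (u^{δ+1} − v^{δ+1})·g dμ | ≤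
  (δ+1)·2^{δ−1}·‖u − v‖_{L²} · ( ‖u‖_{L^{2(δ+1)}}^δ + ‖v‖_{L^{2(δ+1)}}^δ ) · ‖g‖_{L^{2(δ+1)}}. -/
theorem stmt_12 {X : Type*} [MeasurableSpace X] (μ : Measure X) [IsFiniteMeasure μ]
    (δ : ℕ) (hδ : 0 < δ) (u v g : X → ℝ)
    (hu : Measurable u) (hv : Measurable v) (hg : Measurable g)
    (hu2 : Integrable (fun x => |u x| ^ 2) μ)
    (hv2 : Integrable (fun x => |v x| ^ 2) μ)
    (hup : Integrable (fun x => |u x| ^ (2 * (δ + 1))) μ)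
    (hvp : Integrable (fun x => |v x| ^ (2 * (δ + 1))) μ)
    (hgp : Integrable (fun x => |g x| ^ (2 * (δ + 1))) μ) :
    |∫ x, (u x ^ (δ + 1) - v x ^ (δ + 1)) * g x ∂μ| ≤
      ((δ : ℝ) + 1) * 2 ^ (δ - 1) * lpNormR μ 2 (fun x => u x - v x) *
        (lpNormR μ (2 * (δ + 1)) u ^ δ + lpNormR μ (2 * (δ + 1)) v ^ δ) *
        lpNormR μ (2 * (δ + 1)) g :=
  stmt_12_general μ δ u v g hu hv hu2 hv2 hup hvp hgp
end

section
/- Let (X, μ) be a measure space, δ a positive integer, and let u, v : X → ℝ be measurable functions in L^{δ+1}(μ) ∩ L^{2(δ+1)}(μ), and let g : X → ℝ be measurable and essentially bounded. Then | ∫ (u^{2δ+1} − v^{2δ+1})·g dμ | ≤ (2δ+1)·2^{2δ−1}·‖u − v‖_{L^{δ+1}(μ)} · ( ‖u‖_{L^{2(δ+1)}(μ)}^{2δ} + ‖v‖_{L^{2(δ+1)}(μ)}^{2δ} ) · ‖g‖_{L^∞(μ)}. -/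
/-!
Factoring `a^(2δ+1) - b^(2δ+1)` gives pointwise
`|u^(2δ+1) - v^(2δ+1)| ≤ (2δ+1) |u - v| (|u|^(2δ) + |v|^(2δ))`, and Hölder's inequality with
exponents `δ + 1` and `(δ + 1)/δ` bounds `∫ |u - v| |u|^(2δ)` by `‖u - v‖_{δ+1} ‖u‖_{2(δ+1)}^(2δ)`.
Carrying this out for lower Lebesgue integrals and `eLpNorm` needs no integrability; the
hypotheses enter only when passing back to real numbers.
-/

open MeasureTheory

open ENNReal

theorem enorm_pow_succ_sub_pow_succ_le (a b : ℝ) (n : ℕ) :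
    ‖a ^ (n + 1) - b ^ (n + 1)‖ₑ ≤ (n + 1) * ‖a - b‖ₑ * (‖a‖ₑ ^ n + ‖b‖ₑ ^ n) := by
  have hmax : max |a| |b| ^ n ≤ |a| ^ n + |b| ^ n := by
    rcases le_total |a| |b| with hab | hab <;> simp [hab]
  have h : |a ^ (n + 1) - b ^ (n + 1)| ≤ (n + 1) * |a - b| * (|a| ^ n + |b| ^ n) := by
    refine (abs_pow_sub_pow_le a b (n + 1)).trans ?_
    rw [Nat.add_sub_cancel, Nat.cast_succ, mul_comm |a - b|]
    gcongr
  simp only [Real.enorm_eq_ofReal_abs]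
  refine (ofReal_le_ofReal h).trans_eq ?_
  rw [ofReal_mul (by positivity), ofReal_mul (by positivity),
    ofReal_add (pow_nonneg (abs_nonneg a) n) (pow_nonneg (abs_nonneg b) n),
    ofReal_pow (abs_nonneg _), ofReal_pow (abs_nonneg _), ← Nat.cast_succ, ofReal_natCast,
    Nat.cast_succ]

section

variable {X : Type*} [MeasurableSpace X] {μ : Measure X}

theorem lpNormR_eq_toReal_eLpNorm {f : X → ℝ} (hf : AEStronglyMeasurable f μ) {p : ℕ}
    (hp : p ≠ 0) : lpNormR μ p f = (eLpNorm f p μ).toReal := by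
  rw [lpNormR, eLpNorm_eq_lintegral_rpow_enorm_toReal (by exact_mod_cast hp) (by simp),
    integral_eq_lintegral_of_nonneg_ae (.of_forall fun x => by positivity) (by fun_prop),
    ← toReal_rpow]
  simp [Real.enorm_eq_ofReal_abs, ofReal_pow]

theorem memLp_of_integrable_abs_pow {f : X → ℝ} (hf : AEStronglyMeasurable f μ) {n : ℕ}
    (hn : n ≠ 0) (h : Integrable (fun x => |f x| ^ n) μ) : MemLp f n μ := by
  rw [← integrable_norm_rpow_iff hf (by exact_mod_cast hn) (by simp)]
  simpa using h

theorem lintegral_enorm_mul_enorm_pow_le {E F : Type*} [NormedAddCommGroup E]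
    [NormedAddCommGroup F] {w : X → E} {z : X → F} (hw : AEStronglyMeasurable w μ)
    (hz : AEStronglyMeasurable z μ) (n : ℕ) :
    ∫⁻ x, ‖w x‖ₑ * ‖z x‖ₑ ^ (2 * n) ∂μ ≤
      eLpNorm w (n + 1 : ℕ) μ * eLpNorm z (2 * (n + 1) : ℕ) μ ^ (2 * n) := by
  rcases n.eq_zero_or_pos with rfl | hn
  · simp [eLpNorm_one_eq_lintegral_enorm]
  have hpq : Real.HolderConjugate (n + 1) ((n + 1) / n) := by
    rw [Real.holderConjugate_iff_eq_conjExponent (by simpa using hn)]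
    simp
  refine (lintegral_mul_le_Lp_mul_Lq μ hpq hw.enorm (hz.enorm.pow_const _)).trans_eq ?_
  have hexp (x : X) :
      (‖z x‖ₑ ^ (2 * n)) ^ (((n : ℝ) + 1) / n) = ‖z x‖ₑ ^ ((2 * (n + 1) : ℕ) : ℝ) := by
    rw [← rpow_natCast, ← rpow_mul]
    push_cast
    field_simp
  rw [eLpNorm_eq_lintegral_rpow_enorm_toReal (by simp) (by simp),
    eLpNorm_eq_lintegral_rpow_enorm_toReal (by simp) (by finiteness)]
  simp_rw [hexp, toReal_natCast, ← rpow_natCast _ (2 * n), ← rpow_mul]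
  push_cast
  congr 2
  field_simp

theorem lintegral_enorm_pow_sub_pow_mul_le {u v : X → ℝ} (hu : AEStronglyMeasurable u μ)
    (hv : AEStronglyMeasurable v μ) (g : X → ℝ) (n : ℕ) :
    ∫⁻ x, ‖(u x ^ (2 * n + 1) - v x ^ (2 * n + 1)) * g x‖ₑ ∂μ ≤
      (2 * n + 1) * eLpNorm (fun x => u x - v x) (n + 1 : ℕ) μ *
        (eLpNorm u (2 * (n + 1) : ℕ) μ ^ (2 * n) + eLpNorm v (2 * (n + 1) : ℕ) μ ^ (2 * n)) *
        eLpNorm g ⊤ μ := by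
  have hw : AEStronglyMeasurable (fun x => u x - v x) μ := hu.sub hv
  set W := eLpNorm (fun x => u x - v x) (n + 1 : ℕ) μ
  calc ∫⁻ x, ‖(u x ^ (2 * n + 1) - v x ^ (2 * n + 1)) * g x‖ₑ ∂μ
      ≤ ∫⁻ x, (2 * n + 1) * (‖u x - v x‖ₑ * ‖u x‖ₑ ^ (2 * n) +
          ‖u x - v x‖ₑ * ‖v x‖ₑ ^ (2 * n)) * eLpNorm g ⊤ μ ∂μ := by
        refine lintegral_mono_ae ?_
        filter_upwards [ae_le_eLpNormEssSup (f := g)] with x hgx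
        have hpow := enorm_pow_succ_sub_pow_succ_le (u x) (v x) (2 * n)
        push_cast at hpow
        rw [enorm_mul, eLpNorm_exponent_top]
        gcongr
        exact hpow.trans_eq (by ring)
    _ = (2 * n + 1) * (∫⁻ x, ‖u x - v x‖ₑ * ‖u x‖ₑ ^ (2 * n) ∂μ +
          ∫⁻ x, ‖u x - v x‖ₑ * ‖v x‖ₑ ^ (2 * n) ∂μ) * eLpNorm g ⊤ μ := by
        rw [lintegral_mul_const'' _ (by fun_prop), lintegral_const_mul'' _ (by fun_prop),
          lintegral_add_left' (by fun_prop)]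
    _ ≤ (2 * n + 1) * (W * eLpNorm u (2 * (n + 1) : ℕ) μ ^ (2 * n) +
          W * eLpNorm v (2 * (n + 1) : ℕ) μ ^ (2 * n)) * eLpNorm g ⊤ μ := by
        gcongr
        · exact lintegral_enorm_mul_enorm_pow_le hw hu n
        · exact lintegral_enorm_mul_enorm_pow_le hw hv n
    _ = _ := by ring

end

theorem stmt_13_general {X : Type*} [MeasurableSpace X] (μ : Measure X)
    (δ : ℕ) (u v g : X → ℝ)
    (hu : Measurable u) (hv : Measurable v)
    (hu1 : Integrable (fun x => |u x| ^ (δ + 1)) μ)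
    (hv1 : Integrable (fun x => |v x| ^ (δ + 1)) μ)
    (hup : Integrable (fun x => |u x| ^ (2 * (δ + 1))) μ)
    (hvp : Integrable (fun x => |v x| ^ (2 * (δ + 1))) μ)
    (hgb : eLpNorm g ⊤ μ < ⊤) :
    |∫ x, (u x ^ (2 * δ + 1) - v x ^ (2 * δ + 1)) * g x ∂μ| ≤
      (2 * (δ : ℝ) + 1) * 2 ^ (2 * δ - 1) * lpNormR μ (δ + 1) (fun x => u x - v x) *
        (lpNormR μ (2 * (δ + 1)) u ^ (2 * δ) + lpNormR μ (2 * (δ + 1)) v ^ (2 * δ)) *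
        (eLpNorm g ⊤ μ).toReal := by
  have hu' := hu.aestronglyMeasurable (μ := μ)
  have hv' := hv.aestronglyMeasurable (μ := μ)
  have hw : MemLp (fun x => u x - v x) (δ + 1 : ℕ) μ :=
    (memLp_of_integrable_abs_pow hu' (by omega) hu1).sub
      (memLp_of_integrable_abs_pow hv' (by omega) hv1)
  have hW := hw.eLpNorm_lt_top
  have hU := (memLp_of_integrable_abs_pow hu' (by omega) hup).eLpNorm_lt_top
  have hV := (memLp_of_integrable_abs_pow hv' (by omega) hvp).eLpNorm_lt_top
  rw [lpNormR_eq_toReal_eLpNorm hw.aestronglyMeasurable (by omega),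
    lpNormR_eq_toReal_eLpNorm hu' (by omega), lpNormR_eq_toReal_eLpNorm hv' (by omega)]
  calc |∫ x, (u x ^ (2 * δ + 1) - v x ^ (2 * δ + 1)) * g x ∂μ|
      ≤ (∫⁻ x, ‖(u x ^ (2 * δ + 1) - v x ^ (2 * δ + 1)) * g x‖ₑ ∂μ).toReal := by
        rw [← Real.norm_eq_abs]
        simp_rw [← ofReal_norm]
        exact norm_integral_le_lintegral_norm _
    _ ≤ (2 * (δ : ℝ) + 1) * 1 * (eLpNorm (fun x => u x - v x) (δ + 1 : ℕ) μ).toReal *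
          ((eLpNorm u (2 * (δ + 1) : ℕ) μ).toReal ^ (2 * δ) +
            (eLpNorm v (2 * (δ + 1) : ℕ) μ).toReal ^ (2 * δ)) * (eLpNorm g ⊤ μ).toReal := by
        refine (toReal_mono ?_ (lintegral_enorm_pow_sub_pow_mul_le hu' hv' g δ)).trans_eq ?_
        · finiteness
        · rw [toReal_mul, toReal_mul, toReal_mul,
            toReal_add (pow_ne_top hU.ne) (pow_ne_top hV.ne), toReal_pow, toReal_pow, mul_one]
          norm_cast
    _ ≤ _ := by
        gcongr
        exact one_le_pow₀ one_le_two

/-- Hölder bound for the cubic-type term (paper's estimate (216)): for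
u, v ∈ L^{δ+1}(μ) ∩ L^{2(δ+1)}(μ) and g measurable essentially bounded,
| ∫ (u^{2δ+1} − v^{2δ+1})·g dμ | ≤
  (2δ+1)·2^{2δ−1}·‖u − v‖_{L^{δ+1}} · ( ‖u‖_{L^{2(δ+1)}}^{2δ} + ‖v‖_{L^{2(δ+1)}}^{2δ} ) · ‖g‖_{L^∞}. -/
theorem stmt_13 {X : Type*} [MeasurableSpace X] (μ : Measure X)
    (δ : ℕ) (hδ : 0 < δ) (u v g : X → ℝ)
    (hu : Measurable u) (hv : Measurable v) (hg : Measurable g)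
    (hu1 : Integrable (fun x => |u x| ^ (δ + 1)) μ)
    (hv1 : Integrable (fun x => |v x| ^ (δ + 1)) μ)
    (hup : Integrable (fun x => |u x| ^ (2 * (δ + 1))) μ)
    (hvp : Integrable (fun x => |v x| ^ (2 * (δ + 1))) μ)
    (hgb : eLpNorm g ⊤ μ < ⊤) :
    |∫ x, (u x ^ (2 * δ + 1) - v x ^ (2 * δ + 1)) * g x ∂μ| ≤
      (2 * (δ : ℝ) + 1) * 2 ^ (2 * δ - 1) * lpNormR μ (δ + 1) (fun x => u x - v x) *
        (lpNormR μ (2 * (δ + 1)) u ^ (2 * δ) + lpNormR μ (2 * (δ + 1)) v ^ (2 * δ)) *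
        (eLpNorm g ⊤ μ).toReal :=
  stmt_13_general μ δ u v g hu hv hu1 hv1 hup hvp hgb
end
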